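/- arXiv:2412.19730 — 5 statements merged into one kernel-verified Lean document; each statement's English description precedes it below -/
import Mathlib

section
/- Let $\mu_n$ and $\mu$ be $d$-dimensional permutons with distribution functions $F_n$ and $F$ respectively. Then $\mu_n$ converges weakly to $\mu$ if and only if $\|F_n - F\|_\infty \to 0$, i.e., $F_n$ converges to $F$ uniformly on $[0,1]^d$. -/
open MeasureTheory Filter Topology

/-- A `d`-dimensional permuton: a Borel probability measure on `[0,1]^d` with uniform
one-dimensional marginals. -/
def IsPermuton {d : ℕ} (μ : Measure (Fin d → ℝ)) : Prop :=
  IsProbabilityMeasure μ ∧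
    ∀ (i : Fin d) (a b : ℝ), 0 ≤ a → a ≤ b → b ≤ 1 →
      μ {x | x i ∈ Set.Icc a b} = ENNReal.ofReal (b - a)

/-- The cumulative distribution function `F(x) = μ([0,x₁] × ⋯ × [0,x_d])`. -/
noncomputable def cdf {d : ℕ} (μ : Measure (Fin d → ℝ)) (x : Fin d → ℝ) : ℝ :=
  (μ {y | ∀ i, y i ≤ x i}).toReal

/-! The marginals of a permuton are uniform on `[0,1]`, so coordinate hyperplanes are null and
`F` is `1`-Lipschitz for the `ℓ¹` distance. Hence every orthant `Iic x` is a continuity set of the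
limit, and the portmanteau theorem turns weak convergence into pointwise convergence of `Fₙ`.
Conversely, pointwise convergence of `Fₙ` gives convergence on half-open boxes (an orthant minus a
finite union of orthants, handled by inclusion–exclusion), and boxes form a π-system containing
arbitrarily small neighbourhoods, which is enough for weak convergence. Finally, the `Fₙ` are
equicontinuous, so on the compact cube pointwise and uniform convergence agree (Ascoli); off the
cube `F` takes its value at the nearest point of the cube. -/

open Set

theorem isPiSystem_range_Iic {α : Type*} [SemilatticeInf α] :
    IsPiSystem (range (Iic : α → Set α)) := by
  rintro _ ⟨x, rfl⟩ _ ⟨y, rfl⟩ -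
  exact ⟨x ⊓ y, Iic_inter_Iic.symm⟩

/-- The `min` keeps every removed orthant inside `Iic b`, also when `a i > b i`. -/
theorem pi_Ioc_eq_Iic_sdiff {ι : Type*} [DecidableEq ι] (a b : ι → ℝ) :
    (pi univ fun i => Ioc (a i) (b i)) =
      Iic b \ ⋃ i, Iic (Function.update b i (min (a i) (b i))) := by
  ext y
  simp only [mem_univ_pi, mem_Ioc, forall_and, Set.mem_sdiff, mem_Iic, mem_iUnion, not_exists,
    le_update_iff, le_min_iff]
  constructor
  · rintro ⟨ha, hb⟩
    exact ⟨hb, fun i h => (ha i).not_ge h.1.1⟩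
  · rintro ⟨hb, hn⟩
    exact ⟨fun i => not_le.1 fun h => hn i ⟨⟨h, hb i⟩, fun j _ => hb j⟩, hb⟩

theorem isPiSystem_pi_Ioc {ι : Type*} :
    IsPiSystem (range fun ab : (ι → ℝ) × (ι → ℝ) => pi univ fun i => Ioc (ab.1 i) (ab.2 i)) := by
  rintro _ ⟨⟨a, b⟩, rfl⟩ _ ⟨⟨a', b'⟩, rfl⟩ -
  refine ⟨(a ⊔ a', b ⊓ b'), ?_⟩
  simp [← pi_inter_distrib, Ioc_inter_Ioc]

theorem tendsto_measureReal_pi_Ioc {ι κ : Type*} [Fintype ι] {l : Filter κ}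
    {μs : κ → Measure (ι → ℝ)} {μ : Measure (ι → ℝ)} [∀ n, IsFiniteMeasure (μs n)]
    [IsFiniteMeasure μ]
    (h : ∀ x, Tendsto (fun n => (μs n).real (Iic x)) l (𝓝 (μ.real (Iic x)))) (a b : ι → ℝ) :
    Tendsto (fun n => (μs n).real (pi univ fun i => Ioc (a i) (b i))) l
      (𝓝 (μ.real (pi univ fun i => Ioc (a i) (b i)))) := by
  classical
  set c : ι → ι → ℝ := fun i => Function.update b i (min (a i) (b i))
  have hcb : ⋃ i, Iic (c i) ⊆ Iic b :=
    iUnion_subset fun i => Iic_subset_Iic.2 (update_le_self_iff.2 (min_le_right _ _))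
  have hbox : ∀ (ν : Measure (ι → ℝ)) [IsFiniteMeasure ν],
      ν.real (pi univ fun i => Ioc (a i) (b i)) =
        ν.real (Iic b) - ν.real (⋃ s ∈ Finset.univ.image fun i => Iic (c i), s) := by
    intro ν _
    rw [pi_Ioc_eq_Iic_sdiff,
      measureReal_sdiff hcb (MeasurableSet.iUnion fun _ => measurableSet_Iic)]
    simp
  simp only [hbox]
  refine (h b).sub (isPiSystem_range_Iic.tendsto_measureReal_biUnion ?_ ?_ ?_
    (fun _ _ => measure_ne_top _ _) (fun _ _ _ => measure_ne_top _ _))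
  · intro s hs
    obtain ⟨i, -, rfl⟩ := Finset.mem_image.1 hs
    exact ⟨c i, rfl⟩
  · rintro _ ⟨x, rfl⟩; exact measurableSet_Iic
  · rintro _ ⟨x, rfl⟩; exact h x

theorem MeasureTheory.ProbabilityMeasure.tendsto_of_forall_tendsto_measureReal_Iic
    {ι κ : Type*} [Fintype ι] {l : Filter κ} [l.IsCountablyGenerated]
    {μs : κ → ProbabilityMeasure (ι → ℝ)} {μ : ProbabilityMeasure (ι → ℝ)}
    (h : ∀ x, Tendsto (fun n => (μs n : Measure (ι → ℝ)).real (Iic x)) l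
      (𝓝 ((μ : Measure (ι → ℝ)).real (Iic x)))) :
    Tendsto μs l (𝓝 μ) := by
  refine isPiSystem_pi_Ioc.tendsto_probabilityMeasure_of_tendsto_of_mem ?_ ?_ ?_
  · rintro _ ⟨ab, rfl⟩
    exact MeasurableSet.univ_pi fun i => measurableSet_Ioc
  · intro u hu x hx
    obtain ⟨ε, hε, hball⟩ := Metric.isOpen_iff.1 hu x hx
    refine ⟨_, ⟨(fun i => x i - ε / 2, fun i => x i + ε / 2), rfl⟩,
      set_pi_mem_nhds finite_univ fun i _ => Ioc_mem_nhds (by linarith) (by linarith), ?_⟩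
    refine Subset.trans ?_ ((Metric.closedBall_subset_ball (half_lt_self hε)).trans hball)
    rw [closedBall_pi _ (half_pos hε).le]
    refine pi_mono fun i _ => ?_
    rw [Real.closedBall_eq_Icc]
    exact Ioc_subset_Icc_self
  · rintro _ ⟨⟨a, b⟩, rfl⟩
    have := tendsto_measureReal_pi_Ioc h a b
    simp only [ProbabilityMeasure.measureReal_eq_coe_coeFn] at this
    exact NNReal.tendsto_coe.1 this

theorem tendsto_iSup_abs_sub_iff_tendstoUniformly {κ X : Type*} {l : Filter κ}
    {F : κ → X → ℝ} {f : X → ℝ} (hF : ∀ n, BddAbove (range fun x => |F n x - f x|)) :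
    Tendsto (fun n => ⨆ x, |F n x - f x|) l (𝓝 0) ↔ TendstoUniformly F f l := by
  have hnonneg : ∀ n, 0 ≤ ⨆ x, |F n x - f x| := fun n => Real.iSup_nonneg fun _ => abs_nonneg _
  simp only [Metric.tendstoUniformly_iff, Metric.tendsto_nhds, Real.dist_eq, sub_zero,
    abs_of_nonneg (hnonneg _), abs_sub_comm (f _)]
  refine ⟨fun h ε hε => ?_, fun h ε hε => ?_⟩
  · filter_upwards [h ε hε] with n hn x
    exact (le_ciSup (hF n) x).trans_lt hn
  · filter_upwards [h (ε / 2) (half_pos hε)] with n hn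
    exact (Real.iSup_le (fun x => (hn x).le) (half_pos hε).le).trans_lt (half_lt_self hε)

namespace IsPermuton

variable {d : ℕ} {μ : Measure (Fin d → ℝ)}

theorem map_eval (hμ : IsPermuton μ) (i : Fin d) :
    μ.map (fun y => y i) = volume.restrict (Icc 0 1) := by
  have := hμ.1
  have := Measure.isProbabilityMeasure_map (μ := μ) (measurable_pi_apply i).aemeasurable
  have hIcc : ∀ a b : ℝ, 0 ≤ a → b ≤ 1 → μ.map (fun y => y i) (Icc a b) = volume (Icc a b) := by
    intro a b ha hb
    rcases le_or_gt a b with hab | hab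
    · rw [Measure.map_apply (measurable_pi_apply i) measurableSet_Icc, Real.volume_Icc]
      exact hμ.2 i a b ha hab hb
    · simp [Icc_eq_empty_of_lt hab]
  have hsupp : (μ.map (fun y => y i)).restrict (Icc 0 1) = μ.map (fun y => y i) := by
    refine Measure.restrict_eq_self_of_ae_mem ((prob_compl_eq_zero_iff measurableSet_Icc).2 ?_)
    simpa using hIcc 0 1 le_rfl le_rfl
  rw [← hsupp]
  refine Measure.ext_of_Icc _ _ fun a b _ => ?_
  rw [Measure.restrict_apply measurableSet_Icc, Measure.restrict_apply measurableSet_Icc,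
    Icc_inter_Icc]
  exact hIcc _ _ (le_max_right _ _) (min_le_right _ _)

theorem measure_eval_preimage (hμ : IsPermuton μ) (i : Fin d) {s : Set ℝ}
    (hs : MeasurableSet s) : μ {y | y i ∈ s} = volume (s ∩ Icc 0 1) := by
  rw [← Measure.restrict_apply hs, ← hμ.map_eval i, Measure.map_apply (measurable_pi_apply i) hs]
  rfl

theorem measure_hyperplane_eq_zero (hμ : IsPermuton μ) (i : Fin d) (c : ℝ) : μ {y | y i = c} = 0 :=
  (hμ.measure_eval_preimage i (measurableSet_singleton c)).trans
    (measure_mono_null inter_subset_left Real.volume_singleton)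

theorem measureReal_eval_mem_Ioc_le (hμ : IsPermuton μ) (i : Fin d) (a b : ℝ) :
    μ.real {y | y i ∈ Ioc a b} ≤ |b - a| := by
  rw [measureReal_def, hμ.measure_eval_preimage i measurableSet_Ioc]
  calc (volume (Ioc a b ∩ Icc 0 1)).toReal ≤ volume.real (Ioc a b) :=
        ENNReal.toReal_mono (by simp) (measure_mono inter_subset_left)
    _ ≤ |b - a| := by rw [Real.volume_real_Ioc]; exact max_le (le_abs_self _) (abs_nonneg _)

theorem ae_mem_Ioc (hμ : IsPermuton μ) : ∀ᵐ y ∂μ, ∀ i, y i ∈ Ioc (0 : ℝ) 1 := by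
  refine ae_all_iff.2 fun i => ?_
  rw [ae_iff]
  have : {y : Fin d → ℝ | ¬ y i ∈ Ioc 0 1} = {y | y i ∈ (Ioc 0 1)ᶜ} := rfl
  rw [this, hμ.measure_eval_preimage i measurableSet_Ioc.compl]
  refine measure_mono_null (fun t ⟨ht, ht'⟩ => ?_) (Real.volume_singleton (a := 0))
  simp only [mem_compl_iff, mem_Ioc, not_and, not_le] at ht
  exact le_antisymm (not_lt.1 fun h => (ht h).not_ge ht'.2) ht'.1

theorem cdf_le_one (hμ : IsPermuton μ) (x : Fin d → ℝ) : cdf μ x ≤ 1 :=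
  have := hμ.1
  measureReal_le_one

theorem cdf_le_cdf_add (hμ : IsPermuton μ) (x y : Fin d → ℝ) :
    cdf μ x ≤ cdf μ y + ∑ i, |x i - y i| := by
  have := hμ.1
  have hcover : Iic x ⊆ Iic y ∪ ⋃ i, {z : Fin d → ℝ | z i ∈ Ioc (y i) (x i)} := by
    intro z hz
    by_cases hzy : ∀ i, z i ≤ y i
    · exact Or.inl hzy
    · obtain ⟨i, hi⟩ := not_forall.1 hzy
      exact Or.inr (mem_iUnion.2 ⟨i, not_le.1 hi, hz i⟩)
  calc cdf μ x = μ.real (Iic x) := rfl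
    _ ≤ μ.real (Iic y) + μ.real (⋃ i, {z : Fin d → ℝ | z i ∈ Ioc (y i) (x i)}) :=
      (measureReal_mono hcover).trans (measureReal_union_le _ _)
    _ ≤ cdf μ y + ∑ i, μ.real {z : Fin d → ℝ | z i ∈ Ioc (y i) (x i)} :=
      add_le_add le_rfl (measureReal_iUnion_fintype_le _)
    _ ≤ cdf μ y + ∑ i, |x i - y i| := by
      gcongr with i
      exact hμ.measureReal_eval_mem_Ioc_le i _ _

theorem lipschitzWith_cdf (hμ : IsPermuton μ) : LipschitzWith d (cdf μ) := by
  refine LipschitzWith.of_dist_le_mul fun x y => ?_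
  have hsum : ∑ i, |x i - y i| ≤ d * dist x y := by
    calc ∑ i, |x i - y i| ≤ ∑ _i : Fin d, dist x y :=
          Finset.sum_le_sum fun i _ => (Real.dist_eq _ _).symm.trans_le (dist_le_pi_dist x y i)
      _ = d * dist x y := by simp
  rw [Real.dist_eq, abs_sub_le_iff, NNReal.coe_natCast]
  constructor
  · linarith [hμ.cdf_le_cdf_add x y]
  · have := hμ.cdf_le_cdf_add y x
    simp only [abs_sub_comm (y _)] at this
    linarith

theorem cdf_inf_one_sup_zero (hμ : IsPermuton μ) (x : Fin d → ℝ) :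
    cdf μ (x ⊓ 1 ⊔ 0) = cdf μ x := by
  refine measureReal_congr (eventuallyEq_set.2 ?_)
  filter_upwards [hμ.ae_mem_Ioc] with y hy
  refine forall_congr' fun i => ?_
  simp [(hy i).1.not_ge, (hy i).2]

theorem measure_frontier_Iic (hμ : IsPermuton μ) (x : Fin d → ℝ) : μ (frontier (Iic x)) = 0 := by
  refine measure_mono_null (fun y hy => ?_)
    (measure_iUnion_null fun i => hμ.measure_hyperplane_eq_zero i (x i))
  rw [← pi_univ_Iic, frontier, closure_pi_set, interior_pi_set finite_univ] at hy
  simp only [closure_Iic, interior_Iic, Set.mem_sdiff, mem_univ_pi, mem_Iic, mem_Iio, not_forall,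
    not_lt] at hy
  obtain ⟨hle, i, hge⟩ := hy
  exact mem_iUnion.2 ⟨i, le_antisymm (hle i) hge⟩

theorem tendsto_integral_iff_tendsto_cdf {κ : Type*} {l : Filter κ} [l.IsCountablyGenerated]
    {μs : κ → Measure (Fin d → ℝ)} (hμs : ∀ n, IsPermuton (μs n)) (hμ : IsPermuton μ) :
    (∀ f : BoundedContinuousFunction (Fin d → ℝ) ℝ,
        Tendsto (fun n => ∫ x, f x ∂(μs n)) l (𝓝 (∫ x, f x ∂μ))) ↔
      ∀ x, Tendsto (fun n => cdf (μs n) x) l (𝓝 (cdf μ x)) := by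
  let P : κ → ProbabilityMeasure (Fin d → ℝ) := fun n => ⟨μs n, (hμs n).1⟩
  let Pμ : ProbabilityMeasure (Fin d → ℝ) := ⟨μ, hμ.1⟩
  refine (ProbabilityMeasure.tendsto_iff_forall_integral_tendsto (μs := P) (μ := Pμ)).symm.trans
    ⟨fun h x => ?_, fun h => ProbabilityMeasure.tendsto_of_forall_tendsto_measureReal_Iic h⟩
  have := hμ.1
  exact (ENNReal.tendsto_toReal (measure_ne_top μ _)).comp
    (ProbabilityMeasure.tendsto_measure_of_null_frontier_of_tendsto' h (hμ.measure_frontier_Iic x))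

theorem tendsto_cdf_iff_tendsto_iSup {κ : Type*} {l : Filter κ} {μs : κ → Measure (Fin d → ℝ)}
    (hμs : ∀ n, IsPermuton (μs n)) (hμ : IsPermuton μ) :
    (∀ x, Tendsto (fun n => cdf (μs n) x) l (𝓝 (cdf μ x))) ↔
      Tendsto (fun n => ⨆ z : {z : Fin d → ℝ // ∀ i, z i ∈ Icc (0 : ℝ) 1},
        |cdf (μs n) z.1 - cdf μ z.1|) l (𝓝 0) := by
  have hcube : IsCompact {z : Fin d → ℝ | ∀ i, z i ∈ Icc (0 : ℝ) 1} := by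
    simpa [Set.pi] using isCompact_univ_pi fun (_ : Fin d) => isCompact_Icc (a := (0 : ℝ)) (b := 1)
  have : CompactSpace {z : Fin d → ℝ // ∀ i, z i ∈ Icc (0 : ℝ) 1} :=
    isCompact_iff_compactSpace.1 hcube
  have hequi : Equicontinuous fun n (z : {z : Fin d → ℝ // ∀ i, z i ∈ Icc (0 : ℝ) 1}) =>
      cdf (μs n) z.1 :=
    (LipschitzWith.uniformEquicontinuous _ (d * 1) fun n =>
      (hμs n).lipschitzWith_cdf.comp (LipschitzWith.subtype_val _)).equicontinuous
  have hbdd : ∀ n, BddAbove (range fun z : {z : Fin d → ℝ // ∀ i, z i ∈ Icc (0 : ℝ) 1} =>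
      |cdf (μs n) z.1 - cdf μ z.1|) := fun n =>
    ⟨1, forall_mem_range.2 fun z => abs_sub_le_of_nonneg_of_le measureReal_nonneg
      ((hμs n).cdf_le_one _) measureReal_nonneg (hμ.cdf_le_one _)⟩
  have huniform : TendstoUniformly (fun n (z : {z : Fin d → ℝ // ∀ i, z i ∈ Icc (0 : ℝ) 1}) =>
      cdf (μs n) z.1) (fun z => cdf μ z.1) l ↔ ∀ z : {z : Fin d → ℝ // ∀ i, z i ∈ Icc (0 : ℝ) 1},
        Tendsto (fun n => cdf (μs n) z.1) l (𝓝 (cdf μ z.1)) :=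
    (UniformFun.tendsto_iff_tendstoUniformly.symm.trans (hequi.tendsto_uniformFun_iff_pi l _)).trans
      tendsto_pi_nhds
  rw [tendsto_iSup_abs_sub_iff_tendstoUniformly hbdd, huniform]
  refine ⟨fun h z => h z.1, fun h x => ?_⟩
  have hx := h ⟨x ⊓ 1 ⊔ 0, fun i => ⟨le_sup_right, sup_le inf_le_right zero_le_one⟩⟩
  rw [hμ.cdf_inf_one_sup_zero] at hx
  exact hx.congr fun n => (hμs n).cdf_inf_one_sup_zero x

end IsPermuton

/-- Permutons `μₙ` converge weakly to a permuton `μ` if and only if the distribution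
functions `Fₙ` converge uniformly on `[0,1]^d` to `F`. -/
theorem permuton_weak_convergence_iff_unif_cdf {d : ℕ}
    (μs : ℕ → Measure (Fin d → ℝ)) (μ : Measure (Fin d → ℝ))
    (hμs : ∀ n, IsPermuton (μs n)) (hμ : IsPermuton μ) :
    (∀ f : BoundedContinuousFunction (Fin d → ℝ) ℝ,
        Tendsto (fun n => ∫ x, f x ∂(μs n)) atTop (𝓝 (∫ x, f x ∂μ))) ↔
      Tendsto
        (fun n => ⨆ z : {z : Fin d → ℝ // ∀ i, z i ∈ Set.Icc (0:ℝ) 1},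
          |cdf (μs n) z.1 - cdf μ z.1|) atTop (𝓝 0) :=
  (hμ.tendsto_integral_iff_tendsto_cdf hμs).trans (hμ.tendsto_cdf_iff_tendsto_iSup hμs)
end

section
/- Let $\tau$ be a $d$-dimensional permutation of size $k$ and $\sigma$ a $d$-dimensional permutation of size $n$ with $k \le n$. Then the pattern frequency of $\tau$ in $\sigma$ and the pattern frequency of $\tau$ in the permuton $\mu_\sigma$ associated to $\sigma$ differ by at most $\binom{k}{2}/n$, i.e., $|\mathrm{freq}(\tau,\sigma) - \mathrm{freq}(\tau,\mu_\sigma)| \le \frac{1}{n}\binom{k}{2}$. -/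
open MeasureTheory

/-- A `(d+1)`-dimensional permutation of size `n`: a map `σ : [n] → [n]^d` whose
restriction to each coordinate is a permutation of `[n]`. -/
def IsDPerm {d n : ℕ} (σ : Fin n → Fin d → Fin n) : Prop :=
  ∀ j : Fin d, Function.Bijective fun i => σ i j

/-- `τ` is the pattern of `σ` on the index set given by the strictly monotone map `e`:
the values of `σ` on the range of `e` are in the same relative order as `τ`. -/
def IsPatternOf {d k n : ℕ} (τ : Fin k → Fin d → Fin k) (σ : Fin n → Fin d → Fin n)
    (e : Fin k → Fin n) : Prop :=
  ∀ (a b : Fin k) (j : Fin d), τ a j < τ b j ↔ σ (e a) j < σ (e b) j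

/-- The pattern frequency `freq(τ, σ)`: the fraction of `k`-element subsets of `[n]`
(equivalently, strictly monotone maps `Fin k → Fin n`) on which the pattern of `σ` is `τ`. -/
noncomputable def freqPerm {d k n : ℕ} (τ : Fin k → Fin d → Fin k)
    (σ : Fin n → Fin d → Fin n) : ℝ :=
  (Nat.card {e : Fin k → Fin n // StrictMono e ∧ IsPatternOf τ σ e} : ℝ) / (n.choose k : ℝ)

/-- The `k` points `x` (in `([0,1]^{d+1})^k`) realize the pattern `τ`: after sorting the
points by their first coordinate, the relative order of the remaining coordinates is `τ`. -/
def hasPattern {d k : ℕ} (τ : Fin k → Fin d → Fin k) (x : Fin k → (Fin (d+1) → ℝ)) : Prop :=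
  ∃ g : Equiv.Perm (Fin k),
    (∀ a b : Fin k, a < b ↔ x (g a) 0 < x (g b) 0) ∧
    (∀ (a b : Fin k) (j : Fin d), τ a j < τ b j ↔ x (g a) j.succ < x (g b) j.succ)

/-- The pattern frequency `freq(τ, μ)` of `τ` in a measure `μ` on `[0,1]^{d+1}`: the
probability that `k` i.i.d. points sampled from `μ` are in relative order `τ`. -/
noncomputable def freqMeas {d k : ℕ} (τ : Fin k → Fin d → Fin k)
    (μ : Measure (Fin (d+1) → ℝ)) : ℝ :=
  ((Measure.pi fun _ : Fin k => μ) {x | hasPattern τ x}).toReal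

/-- The permuton `μ_σ` associated to a `(d+1)`-dimensional permutation `σ` of size `n`:
the measure on `[0,1]^{d+1}` with density `n^d 𝟙{σ(⌈n x₁⌉) = (⌈n x₂⌉, …, ⌈n x_{d+1}⌉)}`. -/
noncomputable def permMeasure {d n : ℕ} (σ : Fin n → Fin d → Fin n) :
    Measure (Fin (d+1) → ℝ) :=
  ((n : ENNReal) ^ d) • (volume.restrict {x : Fin (d+1) → ℝ |
    (∀ i, x i ∈ Set.Ioc (0:ℝ) 1) ∧
    ∃ i : Fin n, ⌈(n : ℝ) * x 0⌉₊ = (i : ℕ) + 1 ∧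
      ∀ j : Fin d, ⌈(n : ℝ) * x j.succ⌉₊ = (σ i j : ℕ) + 1})

/-!
The permuton `μ_σ` is uniform on `n` cells of side `1/n`, one around each point of `σ`, and no
two cells share a coordinate slab. Assign to `k` points sampled from `μ_σ` the tuple `f` of cells
containing them. If the entries of `f` are distinct (probability `p = n⁽ᵏ⁾ / nᵏ`), the points are in
relative order `τ` exactly when `τ` is the pattern of `σ` on the range of `f`; each such index
set arises from `k!` tuples. Hence `freq(τ, μ_σ)` lies between `p · freq(τ, σ)` and
`p · freq(τ, σ) + (1 - p)`, and `1 - p ≤ (k choose 2) / n` by the union bound over pairs.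
-/

namespace Permuton

open Set Function

/-- Union bound for collisions among `k` uniform samples from `n` values. -/
theorem pow_succ_le_mul_descFactorial_add (n k : ℕ) :
    n ^ (k + 1) ≤ n * n.descFactorial k + k.choose 2 * n ^ k := by
  induction k with
  | zero => simp
  | succ k ih =>
    have hstep : n * n.descFactorial k ≤ (n - k) * n.descFactorial k + k * n ^ k := by
      rcases le_or_gt k n with hkn | hnk
      · calc n * n.descFactorial k = (n - k) * n.descFactorial k + k * n.descFactorial k := by
              rw [← add_mul, Nat.sub_add_cancel hkn]
          _ ≤ _ := by gcongr; exact Nat.descFactorial_le_pow n k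
      · simp [Nat.descFactorial_eq_zero_iff_lt.2 hnk]
    calc n ^ (k + 1 + 1) = n * n ^ (k + 1) := pow_succ' n _
      _ ≤ n * (n * n.descFactorial k + k.choose 2 * n ^ k) := Nat.mul_le_mul_left n ih
      _ ≤ n * ((n - k) * n.descFactorial k + k * n ^ k + k.choose 2 * n ^ k) :=
        Nat.mul_le_mul_left n (Nat.add_le_add_right hstep _)
      _ = n * n.descFactorial (k + 1) + (k + 1).choose 2 * n ^ (k + 1) := by
        rw [Nat.descFactorial_succ, Nat.choose_succ_succ', Nat.choose_one_right]
        ring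

theorem one_sub_descFactorial_div_pow_le (n k : ℕ) [NeZero n] :
    1 - (n.descFactorial k : ℝ) / n ^ k ≤ k.choose 2 / n := by
  have hn : (0 : ℝ) < n := by simpa using NeZero.pos n
  have h : (n : ℝ) ^ (k + 1) ≤ n * n.descFactorial k + k.choose 2 * n ^ k := by
    exact_mod_cast pow_succ_le_mul_descFactorial_add n k
  rw [sub_le_iff_le_add, div_add_div _ _ hn.ne' (by positivity), le_div_iff₀ (by positivity)]
  rw [pow_succ] at h
  linarith

theorem abs_sub_le_one_sub {a p r : ℝ} (ha₀ : 0 ≤ a) (ha₁ : a ≤ 1) (hlo : a * p ≤ r)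
    (hhi : r ≤ a * p + (1 - p)) : |a - r| ≤ 1 - p := by
  rw [abs_sub_le_iff]
  constructor <;> nlinarith

theorem ncard_injective (α β : Type*) [Fintype α] [Fintype β] :
    {f : α → β | Injective f}.ncard = (Fintype.card β).descFactorial (Fintype.card α) := by
  classical
  rw [← Nat.card_coe_set_eq, Nat.card_eq_fintype_card, ← Fintype.card_embedding_eq]
  exact Fintype.card_congr (Equiv.subtypeInjectiveEquivEmbedding α β)

/-- Each tuple with distinct entries is a strictly monotone tuple precomposed with a unique
permutation. -/
theorem card_exists_perm_strictMono_comp {α : Type*} [LinearOrder α] {k : ℕ}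
    (P : (Fin k → α) → Prop) :
    Nat.card {f : Fin k → α // ∃ g : Equiv.Perm (Fin k), StrictMono (f ∘ g) ∧ P (f ∘ g)} =
      k.factorial * Nat.card {e : Fin k → α // StrictMono e ∧ P e} := by
  let F : {e : Fin k → α // StrictMono e ∧ P e} × Equiv.Perm (Fin k) →
      {f : Fin k → α // ∃ g : Equiv.Perm (Fin k), StrictMono (f ∘ g) ∧ P (f ∘ g)} :=
    fun p => ⟨p.1.1 ∘ p.2.symm, p.2, by simpa [comp_assoc] using p.1.2⟩
  have hF : Bijective F := by
    constructor
    · rintro ⟨⟨e, he⟩, g⟩ ⟨⟨e', he'⟩, g'⟩ h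
      have hfg : e ∘ g.symm = e' ∘ g'.symm := congrArg Subtype.val h
      have hee : e = e' := by
        rw [← he.1.range_inj he'.1, ← g.symm.surjective.range_comp e,
          ← g'.symm.surjective.range_comp e', hfg]
      subst hee
      have hgg : g.symm = g'.symm := Equiv.ext fun a => he.1.injective (congrFun hfg a)
      simp [Equiv.symm_bijective.injective hgg]
    · rintro ⟨f, g, hg⟩
      exact ⟨⟨⟨f ∘ g, hg⟩, g⟩, Subtype.ext (by ext; simp [F])⟩
  rw [← Nat.card_eq_of_bijective F hF, Nat.card_prod, Nat.card_perm, Nat.card_fin, mul_comm]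

section GridCell

variable {ι : Type*} {n : ℕ}

def gridCell (n : ℕ) (v : ι → ℕ) : Set (ι → ℝ) :=
  {x | ∀ l, ⌈(n : ℝ) * x l⌉₊ = v l + 1}

theorem natCeil_mul_eq_succ_iff [NeZero n] {p : ℕ} {t : ℝ} :
    ⌈(n : ℝ) * t⌉₊ = p + 1 ↔ t ∈ Ioc (p / n : ℝ) ((p + 1) / n) := by
  have hn : (0 : ℝ) < n := by simpa using NeZero.pos n
  rw [Nat.ceil_eq_iff p.succ_ne_zero, mem_Ioc, div_lt_iff₀ hn, le_div_iff₀ hn]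
  push_cast
  simp [mul_comm]

theorem gridCell_eq_pi [NeZero n] (v : ι → ℕ) :
    gridCell n v = univ.pi fun l => Ioc (v l / n : ℝ) ((v l + 1) / n) := by
  ext x
  simp [gridCell, natCeil_mul_eq_succ_iff]

theorem measurableSet_gridCell [Countable ι] (v : ι → ℕ) : MeasurableSet (gridCell n v) := by
  rw [gridCell, ofPred_forall]
  exact MeasurableSet.iInter fun l =>
    (Nat.measurable_ceil.comp (measurable_const.mul (measurable_pi_apply l)))
      (measurableSet_singleton _)

theorem volume_gridCell [NeZero n] [Fintype ι] (v : ι → ℕ) :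
    volume (gridCell n v) = (n : ENNReal)⁻¹ ^ Fintype.card ι := by
  have hn : (0 : ℝ) < n := by simpa using NeZero.pos n
  rw [gridCell_eq_pi, Real.volume_pi_Ioc]
  have : ∀ l, ((v l + 1) / n - v l / n : ℝ) = (n : ℝ)⁻¹ := fun l => by field_simp; ring
  simp [this, ENNReal.ofReal_inv_of_pos hn]

theorem disjoint_gridCell {v w : ι → ℕ} (h : v ≠ w) : Disjoint (gridCell n v) (gridCell n w) := by
  obtain ⟨l, hl⟩ := ne_iff.1 h
  refine disjoint_left.2 fun x hv hw => hl ?_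
  simpa using (hv l).symm.trans (hw l)

theorem lt_iff_of_mem_gridCell {v w : ι → ℕ} {x y : ι → ℝ} (hx : x ∈ gridCell n v)
    (hy : y ∈ gridCell n w) {l : ι} (hl : v l ≠ w l) : x l < y l ↔ v l < w l := by
  have hmono : Monotone fun t : ℝ => ⌈(n : ℝ) * t⌉₊ :=
    fun s t hst => Nat.ceil_mono (mul_le_mul_of_nonneg_left hst n.cast_nonneg)
  have hceil : ⌈(n : ℝ) * x l⌉₊ < ⌈(n : ℝ) * y l⌉₊ ↔ v l < w l := by
    rw [hx l, hy l, Nat.add_lt_add_iff_right]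
  rw [← hceil]
  refine ⟨fun hxy => (hmono hxy.le).lt_of_ne ?_, hmono.reflect_lt⟩
  dsimp only
  rw [hx l, hy l]
  omega

theorem mem_Ioc_of_mem_gridCell {v : ι → ℕ} {x : ι → ℝ} (hx : x ∈ gridCell n v) {l : ι}
    (hl : v l < n) : x l ∈ Ioc (0 : ℝ) 1 := by
  have : NeZero n := ⟨by omega⟩
  have hn : (0 : ℝ) < n := by simpa using NeZero.pos n
  obtain ⟨h0, h1⟩ := natCeil_mul_eq_succ_iff.1 (hx l)
  refine ⟨lt_of_le_of_lt (by positivity) h0, h1.trans ?_⟩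
  rw [div_le_one hn]
  exact_mod_cast hl

end GridCell

section PermMeasure

variable {d n : ℕ}

/-- The cell of `μ_σ` carrying the `i`-th point of `σ` is the grid cell with these indices. -/
def cellIdx (σ : Fin n → Fin d → Fin n) (i : Fin n) : Fin (d + 1) → ℕ :=
  Fin.cons (i : ℕ) fun j => (σ i j : ℕ)

theorem cellIdx_lt (σ : Fin n → Fin d → Fin n) (i : Fin n) (l : Fin (d + 1)) :
    cellIdx σ i l < n := by
  cases l using Fin.cases <;> simp [cellIdx]

theorem cellIdx_injective (σ : Fin n → Fin d → Fin n) : Injective (cellIdx σ) :=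
  fun i i' h => Fin.ext (by simpa [cellIdx] using congrFun h 0)

theorem cellIdx_ne {σ : Fin n → Fin d → Fin n} (hσ : IsDPerm σ) {i i' : Fin n} (h : i ≠ i')
    (l : Fin (d + 1)) : cellIdx σ i l ≠ cellIdx σ i' l := by
  cases l using Fin.cases with
  | zero => simpa [cellIdx, Fin.val_inj] using h
  | succ j => simpa [cellIdx, Fin.val_inj] using fun e => h ((hσ j).1 e)

theorem permMeasure_eq [NeZero n] (σ : Fin n → Fin d → Fin n) :
    permMeasure σ = (n : ENNReal) ^ d • volume.restrict (⋃ i, gridCell n (cellIdx σ i)) := by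
  have hcell : ∀ i x, x ∈ gridCell n (cellIdx σ i) ↔
      ⌈(n : ℝ) * x 0⌉₊ = i + 1 ∧ ∀ j : Fin d, ⌈(n : ℝ) * x j.succ⌉₊ = σ i j + 1 := by
    simp [gridCell, Fin.forall_fin_succ, cellIdx]
  rw [permMeasure]
  congr 2
  ext x
  simp only [mem_ofPred_eq, mem_iUnion, hcell]
  refine ⟨fun h => h.2, fun ⟨i, hi⟩ => ⟨fun l => ?_, i, hi⟩⟩
  exact mem_Ioc_of_mem_gridCell ((hcell i x).2 hi) (cellIdx_lt σ i l)

theorem permMeasure_gridCell [NeZero n] (σ : Fin n → Fin d → Fin n) (i : Fin n) :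
    permMeasure σ (gridCell n (cellIdx σ i)) = (n : ENNReal)⁻¹ := by
  have hn : (n : ENNReal) ≠ 0 := by simpa using NeZero.ne n
  rw [permMeasure_eq, Measure.smul_apply, Measure.restrict_apply (measurableSet_gridCell _),
    inter_eq_self_of_subset_left (subset_iUnion (fun i => gridCell n (cellIdx σ i)) i),
    volume_gridCell, Fintype.card_fin, smul_eq_mul, pow_succ, ← mul_assoc, ← mul_pow,
    ENNReal.mul_inv_cancel hn (ENNReal.natCast_ne_top n), one_pow, one_mul]

instance [NeZero n] (σ : Fin n → Fin d → Fin n) : IsProbabilityMeasure (permMeasure σ) := by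
  have hn : (n : ENNReal) ≠ 0 := by simpa using NeZero.ne n
  have hU : MeasurableSet (⋃ i, gridCell n (cellIdx σ i)) :=
    MeasurableSet.iUnion fun i => measurableSet_gridCell _
  have huniv : permMeasure σ univ = permMeasure σ (⋃ i, gridCell n (cellIdx σ i)) := by
    rw [permMeasure_eq, Measure.smul_apply, Measure.smul_apply, Measure.restrict_apply_univ,
      Measure.restrict_apply hU, inter_self]
  constructor
  rw [huniv, measure_iUnion (fun i i' h => disjoint_gridCell ((cellIdx_injective σ).ne h))
    (fun i => measurableSet_gridCell _), tsum_fintype]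
  simp [permMeasure_gridCell, ENNReal.mul_inv_cancel hn (ENNReal.natCast_ne_top n)]

end PermMeasure

section Pattern

/-- `f` lists, in some order, an index set on which `τ` is the pattern of `σ`. -/
def IsUnorderedPatternOf {d k n : ℕ} (τ : Fin k → Fin d → Fin k) (σ : Fin n → Fin d → Fin n)
    (f : Fin k → Fin n) : Prop :=
  ∃ g : Equiv.Perm (Fin k), StrictMono (f ∘ g) ∧ IsPatternOf τ σ (f ∘ g)

theorem hasPattern_congr {d k : ℕ} (τ : Fin k → Fin d → Fin k) {x y : Fin k → Fin (d + 1) → ℝ}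
    (h : ∀ a b l, x a l < x b l ↔ y a l < y b l) : hasPattern τ x ↔ hasPattern τ y := by
  simp only [hasPattern, h]

variable {d k n : ℕ}

theorem hasPattern_cellIdx_iff (τ : Fin k → Fin d → Fin k) (σ : Fin n → Fin d → Fin n)
    (f : Fin k → Fin n) :
    hasPattern τ (fun m l => (cellIdx σ (f m) l : ℝ)) ↔ IsUnorderedPatternOf τ σ f := by
  simp only [hasPattern, IsUnorderedPatternOf, IsPatternOf, cellIdx, Fin.cons_zero,
    Fin.cons_succ, Nat.cast_lt, Fin.val_fin_lt, comp_apply]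
  refine exists_congr fun g => and_congr_left' ⟨fun h a b hab => (h a b).1 hab, ?_⟩
  exact fun h a b => h.lt_iff_lt.symm

theorem hasPattern_iff_of_mem_cellProd {σ : Fin n → Fin d → Fin n} (hσ : IsDPerm σ)
    (τ : Fin k → Fin d → Fin k) {f : Fin k → Fin n} (hf : Injective f)
    {x : Fin k → Fin (d + 1) → ℝ} (hx : ∀ m, x m ∈ gridCell n (cellIdx σ (f m))) :
    hasPattern τ x ↔ IsUnorderedPatternOf τ σ f := by
  rw [← hasPattern_cellIdx_iff, hasPattern_congr]
  intro a b l
  rcases eq_or_ne a b with rfl | hab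
  · simp
  · rw [lt_iff_of_mem_gridCell (hx a) (hx b) (cellIdx_ne hσ (hf.ne hab) l), Nat.cast_lt]

theorem IsUnorderedPatternOf.injective {d k n : ℕ} {τ : Fin k → Fin d → Fin k}
    {σ : Fin n → Fin d → Fin n} {f : Fin k → Fin n} (h : IsUnorderedPatternOf τ σ f) :
    Injective f := by
  obtain ⟨g, hg, -⟩ := h
  exact (Injective.of_comp_iff' f g.bijective).1 hg.injective

theorem freqPerm_mul_descFactorial {d k n : ℕ} (hkn : k ≤ n) (τ : Fin k → Fin d → Fin k)
    (σ : Fin n → Fin d → Fin n) :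
    freqPerm τ σ * n.descFactorial k = {f | IsUnorderedPatternOf τ σ f}.ncard := by
  have hC : (n.choose k : ℝ) ≠ 0 := by exact_mod_cast (Nat.choose_pos hkn).ne'
  rw [← Nat.card_coe_set_eq, coe_ofPred]
  unfold IsUnorderedPatternOf
  rw [card_exists_perm_strictMono_comp, freqPerm, Nat.descFactorial_eq_factorial_mul_choose]
  push_cast
  field_simp

theorem freqPerm_nonneg {d k n : ℕ} (τ : Fin k → Fin d → Fin k) (σ : Fin n → Fin d → Fin n) :
    0 ≤ freqPerm τ σ := by
  unfold freqPerm
  positivity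

theorem freqPerm_le_one {d k n : ℕ} (hkn : k ≤ n) (τ : Fin k → Fin d → Fin k)
    (σ : Fin n → Fin d → Fin n) : freqPerm τ σ ≤ 1 := by
  have hD : (0 : ℝ) < n.descFactorial k := by exact_mod_cast Nat.descFactorial_pos.2 hkn
  have hle : {f | IsUnorderedPatternOf τ σ f}.ncard ≤ {f : Fin k → Fin n | Injective f}.ncard :=
    ncard_le_ncard (fun f hf => IsUnorderedPatternOf.injective hf) (toFinite _)
  rw [ncard_injective, Fintype.card_fin, Fintype.card_fin] at hle
  rw [← mul_le_iff_le_one_left hD, freqPerm_mul_descFactorial hkn]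
  exact_mod_cast hle

end Pattern

section Sampling

variable {d k n : ℕ}

def cellProd (σ : Fin n → Fin d → Fin n) (f : Fin k → Fin n) : Set (Fin k → Fin (d + 1) → ℝ) :=
  univ.pi fun m => gridCell n (cellIdx σ (f m))

theorem measureReal_biUnion_cellProd [NeZero n] (σ : Fin n → Fin d → Fin n)
    (S : Set (Fin k → Fin n)) :
    (Measure.pi fun _ : Fin k => permMeasure σ).real (⋃ f ∈ S, cellProd σ f) =
      S.ncard / n ^ k := by
  classical
  have hdisj : Pairwise (Disjoint on cellProd (k := k) σ) := fun f f' h => by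
    obtain ⟨m, hm⟩ := ne_iff.1 h
    exact disjoint_left.2 fun x hx hx' => disjoint_left.1
      (disjoint_gridCell ((cellIdx_injective σ).ne hm)) (hx m trivial) (hx' m trivial)
  have hcell : ∀ f, (Measure.pi fun _ : Fin k => permMeasure σ).real (cellProd σ f) =
      ((n : ℝ) ^ k)⁻¹ := fun f => by
    simp [measureReal_def, cellProd, Measure.pi_pi, permMeasure_gridCell]
  rw [← S.toFinite.coe_toFinset]
  simp_rw [Finset.mem_coe]
  rw [measureReal_biUnion_finset (hdisj.set_pairwise _)
    (fun f _ => MeasurableSet.univ_pi fun m => measurableSet_gridCell _)]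
  simp [hcell, ncard_eq_toFinset_card', div_eq_mul_inv]

variable [NeZero n] {σ : Fin n → Fin d → Fin n}

theorem ncard_div_le_freqMeas (hσ : IsDPerm σ) (τ : Fin k → Fin d → Fin k) :
    ({f | IsUnorderedPatternOf τ σ f}.ncard : ℝ) / n ^ k ≤ freqMeas τ (permMeasure σ) := by
  rw [← measureReal_biUnion_cellProd, freqMeas, ← measureReal_def]
  refine measureReal_mono fun x hx => ?_
  obtain ⟨f, hf, hxf⟩ := mem_iUnion₂.1 hx
  exact (hasPattern_iff_of_mem_cellProd hσ τ hf.injective fun m => hxf m trivial).2 hf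

/-- On the event that the sample points lie in distinct cells, the pattern is decided by the
cells alone. -/
theorem freqMeas_le (hσ : IsDPerm σ) (τ : Fin k → Fin d → Fin k) :
    freqMeas τ (permMeasure σ) ≤ {f | IsUnorderedPatternOf τ σ f}.ncard / n ^ k +
      (1 - {f : Fin k → Fin n | Injective f}.ncard / n ^ k) := by
  have hE : MeasurableSet (⋃ f ∈ {f : Fin k → Fin n | Injective f}, cellProd σ f) :=
    (toFinite _).measurableSet_biUnion fun f _ =>
      MeasurableSet.univ_pi fun m => measurableSet_gridCell _
  rw [← measureReal_biUnion_cellProd, ← measureReal_biUnion_cellProd,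
    ← probReal_compl_eq_one_sub hE, freqMeas, ← measureReal_def]
  refine (measureReal_mono fun x hx => ?_).trans (measureReal_union_le _ _)
  by_cases hxE : x ∈ ⋃ f ∈ {f : Fin k → Fin n | Injective f}, cellProd σ f
  · obtain ⟨f, hf, hxf⟩ := mem_iUnion₂.1 hxE
    exact Or.inl (mem_iUnion₂.2
      ⟨f, (hasPattern_iff_of_mem_cellProd hσ τ hf fun m => hxf m trivial).1 hx, hxf⟩)
  · exact Or.inr hxE

end Sampling

end Permuton

open Permuton

theorem abs_freqPerm_sub_freqMeas_le_general {d k n : ℕ} (hk : 1 ≤ k) (hkn : k ≤ n)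
    (τ : Fin k → Fin d → Fin k) (σ : Fin n → Fin d → Fin n)
    (hσ : IsDPerm σ) :
    |freqPerm τ σ - freqMeas τ (permMeasure σ)| ≤ (k.choose 2 : ℝ) / n := by
  have : NeZero n := ⟨by omega⟩
  set p : ℝ := n.descFactorial k / n ^ k
  have hgood : freqPerm τ σ * p = {f | IsUnorderedPatternOf τ σ f}.ncard / n ^ k := by
    rw [← freqPerm_mul_descFactorial hkn, mul_div_assoc]
  have hdistinct : p = {f : Fin k → Fin n | Function.Injective f}.ncard / n ^ k := by
    rw [ncard_injective, Fintype.card_fin, Fintype.card_fin]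
  calc |freqPerm τ σ - freqMeas τ (permMeasure σ)| ≤ 1 - p :=
        abs_sub_le_one_sub (freqPerm_nonneg τ σ) (freqPerm_le_one hkn τ σ)
          (hgood ▸ ncard_div_le_freqMeas hσ τ) (hgood ▸ hdistinct ▸ freqMeas_le hσ τ)
    _ ≤ k.choose 2 / n := one_sub_descFactorial_div_pow_le n k

/-- For a `(d+1)`-dimensional permutation `τ` of size `k` and `σ` of size `n ≥ k`, the
pattern frequencies of `τ` in `σ` and in the associated permuton `μ_σ` differ by at most
`(k choose 2)/n`. -/
theorem abs_freqPerm_sub_freqMeas_le {d k n : ℕ} (hk : 1 ≤ k) (hkn : k ≤ n)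
    (τ : Fin k → Fin d → Fin k) (σ : Fin n → Fin d → Fin n)
    (hτ : IsDPerm τ) (hσ : IsDPerm σ) :
    |freqPerm τ σ - freqMeas τ (permMeasure σ)| ≤ (k.choose 2 : ℝ) / n :=
  abs_freqPerm_sub_freqMeas_le_general hk hkn τ σ hσ
end

section
/- The space of $d$-dimensional permutons equipped with the box distance $d_\square$ is a complete metric space: a sequence of $d$-dimensional permutons converges (to a $d$-dimensional permuton) if and only if it is Cauchy with respect to $d_\square$. -/
open MeasureTheory Filter Topology

/-- The box distance `d_□(μ, ν)`: the supremum over boxes `∏ᵢ [xᵢ,yᵢ] ⊆ [0,1]^d` of the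
discrepancy of the two measures. -/
noncomputable def boxDist {d : ℕ} (μ ν : Measure (Fin d → ℝ)) : ℝ :=
  ⨆ p : {p : (Fin d → ℝ) × (Fin d → ℝ) // ∀ i, 0 ≤ p.1 i ∧ p.1 i ≤ p.2 i ∧ p.2 i ≤ 1},
    |(μ (Set.univ.pi fun i => Set.Icc (p.1.1 i) (p.1.2 i))).toReal -
      (ν (Set.univ.pi fun i => Set.Icc (p.1.1 i) (p.1.2 i))).toReal|

/-!
All permutons put their whole mass on the compact cube `[0,1]^d`, so by Prokhorov's theorem a
subsequence of a `d_□`-Cauchy sequence converges weakly to a probability measure `μ`. An open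
slab `{x | x i ∈ (c - δ, c + δ)}` has mass at most `2δ` under every permuton, so by the
portmanteau theorem `μ` gives no mass to the hyperplanes `{x | x i = c}`. Hence boxes and slabs
have `μ`-null frontier, their masses converge along the subsequence, `μ` is a permuton, and the
Cauchy property upgrades convergence along the subsequence to convergence in `d_□`. The converse
is the triangle inequality for `d_□`.
-/

open Set
open scoped ENNReal

namespace IsPermuton

variable {d : ℕ} {μ : Measure (Fin d → ℝ)}

lemma measure_compl_slab_unitInterval (hμ : IsPermuton μ) (i : Fin d) :
    μ {x | x i ∈ Icc (0 : ℝ) 1}ᶜ = 0 := by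
  have := hμ.1
  have hs : MeasurableSet {x : Fin d → ℝ | x i ∈ Icc (0 : ℝ) 1} :=
    measurable_pi_apply i measurableSet_Icc
  rw [prob_compl_eq_zero_iff hs,
    hμ.2 i 0 1 le_rfl zero_le_one le_rfl, sub_zero, ENNReal.ofReal_one]

lemma measure_compl_Icc (hμ : IsPermuton μ) : μ (Icc 0 1 : Set (Fin d → ℝ))ᶜ = 0 := by
  refine measure_mono_null (fun x hx => ?_)
    (measure_iUnion_null hμ.measure_compl_slab_unitInterval)
  simp only [mem_iUnion, mem_compl_iff, mem_ofPred_eq]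
  by_contra! h
  exact hx ⟨fun i => (h i).1, fun i => (h i).2⟩

lemma measure_slab_le (hμ : IsPermuton μ) (i : Fin d) {a b : ℝ} (hab : a ≤ b) :
    μ {x | x i ∈ Icc a b} ≤ ENNReal.ofReal (b - a) := by
  set p := projIcc (0 : ℝ) 1 zero_le_one
  have hsub : {x : Fin d → ℝ | x i ∈ Icc a b} ⊆
      {x | x i ∈ Icc (p a : ℝ) (p b)} ∪ {x | x i ∈ Icc (0 : ℝ) 1}ᶜ := by
    intro x hx
    by_cases hx01 : x i ∈ Icc (0 : ℝ) 1
    · have hpx : (p (x i) : ℝ) = x i := congrArg Subtype.val (projIcc_of_mem _ hx01)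
      refine Or.inl ⟨?_, ?_⟩
      · rw [← hpx]; exact monotone_projIcc _ hx.1
      · rw [← hpx]; exact monotone_projIcc _ hx.2
    · exact Or.inr hx01
  calc μ {x | x i ∈ Icc a b}
      ≤ μ {x | x i ∈ Icc (p a : ℝ) (p b)} + μ {x | x i ∈ Icc (0 : ℝ) 1}ᶜ :=
        (measure_mono hsub).trans (measure_union_le _ _)
    _ = ENNReal.ofReal (p b - p a) := by
        rw [hμ.measure_compl_slab_unitInterval, add_zero,
          hμ.2 i _ _ (p a).2.1 (monotone_projIcc _ hab) (p b).2.2]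
    _ ≤ ENNReal.ofReal (b - a) := by
        refine ENNReal.ofReal_le_ofReal ((le_abs_self _).trans ?_)
        exact (abs_projIcc_sub_projIcc _).trans_eq (abs_of_nonneg (sub_nonneg.2 hab))

end IsPermuton

section Frontier

variable {d : ℕ}

lemma frontier_Icc_subset (a b : ℝ) : frontier (Icc a b) ⊆ {a, b} := by
  rcases le_or_gt a b with hab | hab
  · rw [frontier_Icc hab]
  · simp [Icc_eq_empty_of_lt hab]

lemma frontier_univ_pi_subset {ι : Type*} [Finite ι] {X : ι → Type*}
    [∀ i, TopologicalSpace (X i)] (s : ∀ i, Set (X i)) :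
    frontier (univ.pi s) ⊆ ⋃ i, (fun x => x i) ⁻¹' frontier (s i) := by
  rintro x ⟨hcl, hint⟩
  rw [closure_pi_set] at hcl
  rw [interior_pi_set finite_univ] at hint
  obtain ⟨i, -, hi⟩ := not_forall₂.1 hint
  exact mem_iUnion.2 ⟨i, hcl i trivial, hi⟩

variable {μ : Measure (Fin d → ℝ)}

lemma measure_preimage_frontier_Icc_eq_zero (hμ : ∀ i c, μ {x | x i = c} = 0) (i : Fin d)
    (a b : ℝ) : μ ((fun x => x i) ⁻¹' frontier (Icc a b)) = 0 :=
  measure_mono_null (preimage_mono (frontier_Icc_subset a b))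
    (measure_union_null (hμ i a) (hμ i b))

lemma measure_frontier_slab_eq_zero (hμ : ∀ i c, μ {x | x i = c} = 0) (i : Fin d) (a b : ℝ) :
    μ (frontier {x | x i ∈ Icc a b}) = 0 :=
  measure_mono_null ((continuous_apply i).frontier_preimage_subset _)
    (measure_preimage_frontier_Icc_eq_zero hμ i a b)

lemma measure_frontier_box_eq_zero (hμ : ∀ i c, μ {x | x i = c} = 0) (a b : Fin d → ℝ) :
    μ (frontier (univ.pi fun i => Icc (a i) (b i))) = 0 :=
  measure_mono_null (frontier_univ_pi_subset _)
    (measure_iUnion_null fun i => measure_preimage_frontier_Icc_eq_zero hμ i (a i) (b i))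

end Frontier

section BoxDist

variable {d : ℕ} {μ ν ρ : Measure (Fin d → ℝ)}

lemma bddAbove_range_boxDiscrepancy [IsFiniteMeasure μ] [IsFiniteMeasure ν] :
    BddAbove (range fun p : {p : (Fin d → ℝ) × (Fin d → ℝ) //
        ∀ i, 0 ≤ p.1 i ∧ p.1 i ≤ p.2 i ∧ p.2 i ≤ 1} =>
      |(μ (univ.pi fun i => Icc (p.1.1 i) (p.1.2 i))).toReal -
        (ν (univ.pi fun i => Icc (p.1.1 i) (p.1.2 i))).toReal|) := by
  refine ⟨μ.real univ + ν.real univ, forall_mem_range.2 fun p => ?_⟩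
  have hμ := measureReal_mono (μ := μ) (subset_univ (univ.pi fun i => Icc (p.1.1 i) (p.1.2 i)))
  have hν := measureReal_mono (μ := ν) (subset_univ (univ.pi fun i => Icc (p.1.1 i) (p.1.2 i)))
  exact abs_sub_le_of_nonneg_of_le ENNReal.toReal_nonneg (hμ.trans (le_add_of_nonneg_right
    measureReal_nonneg)) ENNReal.toReal_nonneg (hν.trans (le_add_of_nonneg_left measureReal_nonneg))

lemma abs_sub_le_boxDist [IsFiniteMeasure μ] [IsFiniteMeasure ν] {a b : Fin d → ℝ}
    (hab : ∀ i, 0 ≤ a i ∧ a i ≤ b i ∧ b i ≤ 1) :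
    |(μ (univ.pi fun i => Icc (a i) (b i))).toReal -
      (ν (univ.pi fun i => Icc (a i) (b i))).toReal| ≤ boxDist μ ν :=
  le_ciSup bddAbove_range_boxDiscrepancy (⟨(a, b), hab⟩ :
    {p : (Fin d → ℝ) × (Fin d → ℝ) // ∀ i, 0 ≤ p.1 i ∧ p.1 i ≤ p.2 i ∧ p.2 i ≤ 1})

lemma boxDist_le {ε : ℝ} (h : ∀ a b : Fin d → ℝ, (∀ i, 0 ≤ a i ∧ a i ≤ b i ∧ b i ≤ 1) →
      |(μ (univ.pi fun i => Icc (a i) (b i))).toReal -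
        (ν (univ.pi fun i => Icc (a i) (b i))).toReal| ≤ ε) :
    boxDist μ ν ≤ ε :=
  have : Nonempty {p : (Fin d → ℝ) × (Fin d → ℝ) //
      ∀ i, 0 ≤ p.1 i ∧ p.1 i ≤ p.2 i ∧ p.2 i ≤ 1} :=
    ⟨⟨(0, 1), fun _ => ⟨le_rfl, zero_le_one, le_rfl⟩⟩⟩
  ciSup_le fun p => h p.1.1 p.1.2 p.2

lemma boxDist_nonneg [IsFiniteMeasure μ] [IsFiniteMeasure ν] : 0 ≤ boxDist μ ν :=
  (abs_nonneg _).trans (abs_sub_le_boxDist (a := 0) (b := 1) (μ := μ) (ν := ν)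
    fun _ => ⟨le_rfl, zero_le_one, le_rfl⟩)

lemma boxDist_comm : boxDist μ ν = boxDist ν μ := by
  simp only [boxDist, abs_sub_comm]

lemma boxDist_triangle [IsFiniteMeasure μ] [IsFiniteMeasure ν] [IsFiniteMeasure ρ] :
    boxDist μ ρ ≤ boxDist μ ν + boxDist ν ρ :=
  boxDist_le fun _ _ hab =>
    (abs_sub_le _ _ _).trans (add_le_add (abs_sub_le_boxDist hab) (abs_sub_le_boxDist hab))

lemma boxDist_le_of_tendsto [IsFiniteMeasure μ] {ι : Type*} {l : Filter ι} [l.NeBot]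
    {νs : ι → Measure (Fin d → ℝ)} [∀ k, IsFiniteMeasure (νs k)] [IsFiniteMeasure ρ]
    (hlim : ∀ a b : Fin d → ℝ, Tendsto (fun k => νs k (univ.pi fun i => Icc (a i) (b i))) l
      (𝓝 (ρ (univ.pi fun i => Icc (a i) (b i)))))
    {ε : ℝ} (hε : ∀ᶠ k in l, boxDist μ (νs k) ≤ ε) : boxDist μ ρ ≤ ε :=
  boxDist_le fun a b hab =>
    le_of_tendsto (tendsto_const_nhds.sub
        ((ENNReal.tendsto_toReal (measure_ne_top _ _)).comp (hlim a b))).abs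
      (hε.mono fun _ hk => (abs_sub_le_boxDist hab).trans hk)

end BoxDist

lemma exists_tendsto_subseq_of_measure_compl_eq_zero {E : Type*} [MeasurableSpace E]
    [TopologicalSpace E] [TopologicalSpace.PseudoMetrizableSpace E]
    [TopologicalSpace.SeparableSpace E] [T2Space E] [BorelSpace E]
    {K : Set E} (hK : IsCompact K) {P : ℕ → ProbabilityMeasure E}
    (hP : ∀ n, (P n : Measure E) Kᶜ = 0) :
    ∃ μ : ProbabilityMeasure E, ∃ φ : ℕ → ℕ, StrictMono φ ∧ Tendsto (P ∘ φ) atTop (𝓝 μ) := by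
  have htight : IsTightMeasureSet {(ν : Measure E) | ν ∈ range P} :=
    isTightMeasureSet_iff_exists_isCompact_measure_compl_le.2 fun _ _ =>
      ⟨K, hK, by rintro _ ⟨_, ⟨n, rfl⟩, rfl⟩; simp [hP n]⟩
  obtain ⟨μ, -, φ, hφ, hlim⟩ := (isCompact_closure_of_isTightMeasureSet htight).tendsto_subseq
    fun n => subset_closure (mem_range_self n)
  exact ⟨μ, φ, hφ, hlim⟩

section WeakLimit

variable {d : ℕ} {ι : Type*} {l : Filter ι} {P : ι → ProbabilityMeasure (Fin d → ℝ)}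
  {μ : ProbabilityMeasure (Fin d → ℝ)}

lemma measure_face_eq_zero_of_tendsto [l.NeBot]
    (hP : ∀ k, IsPermuton (P k : Measure (Fin d → ℝ)))
    (hlim : Tendsto P l (𝓝 μ)) (i : Fin d) (c : ℝ) :
    (μ : Measure (Fin d → ℝ)) {x | x i = c} = 0 := by
  refine le_antisymm (ENNReal.le_of_forall_pos_le_add fun ε hε _ => ?_) bot_le
  set δ : ℝ := ε / 2
  have hδ : 0 < δ := by positivity
  have hslab : IsOpen {x : Fin d → ℝ | x i ∈ Ioo (c - δ) (c + δ)} :=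
    isOpen_Ioo.preimage (continuous_apply i)
  calc (μ : Measure (Fin d → ℝ)) {x | x i = c}
      ≤ (μ : Measure (Fin d → ℝ)) {x | x i ∈ Ioo (c - δ) (c + δ)} :=
        measure_mono fun x (hx : x i = c) => by
          simp only [mem_ofPred_eq, hx, mem_Ioo]
          constructor <;> linarith
    _ ≤ l.liminf fun k => (P k : Measure (Fin d → ℝ)) {x | x i ∈ Ioo (c - δ) (c + δ)} :=
        ProbabilityMeasure.le_liminf_measure_open_of_tendsto hlim hslab
    _ ≤ ENNReal.ofReal ((c + δ) - (c - δ)) := by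
        refine liminf_le_of_frequently_le' (Frequently.of_forall fun k => ?_)
        calc (P k : Measure (Fin d → ℝ)) {x | x i ∈ Ioo (c - δ) (c + δ)}
            ≤ (P k : Measure (Fin d → ℝ)) {x | x i ∈ Icc (c - δ) (c + δ)} :=
              measure_mono fun _ hx => Ioo_subset_Icc_self hx
          _ ≤ _ := (hP k).measure_slab_le i (by linarith)
    _ = 0 + ε := by
        rw [zero_add, show c + δ - (c - δ) = ε by ring, ENNReal.ofReal_coe_nnreal]

lemma tendsto_measure_box_of_tendsto [l.NeBot]
    (hP : ∀ k, IsPermuton (P k : Measure (Fin d → ℝ)))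
    (hlim : Tendsto P l (𝓝 μ)) (a b : Fin d → ℝ) :
    Tendsto (fun k => (P k : Measure (Fin d → ℝ)) (univ.pi fun i => Icc (a i) (b i))) l
      (𝓝 ((μ : Measure (Fin d → ℝ)) (univ.pi fun i => Icc (a i) (b i)))) :=
  ProbabilityMeasure.tendsto_measure_of_null_frontier_of_tendsto' hlim
    (measure_frontier_box_eq_zero (measure_face_eq_zero_of_tendsto hP hlim) a b)

lemma isPermuton_of_tendsto [l.NeBot] (hP : ∀ k, IsPermuton (P k : Measure (Fin d → ℝ)))
    (hlim : Tendsto P l (𝓝 μ)) : IsPermuton (μ : Measure (Fin d → ℝ)) := by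
  refine ⟨inferInstance, fun i a b ha hab hb => tendsto_nhds_unique
    (ProbabilityMeasure.tendsto_measure_of_null_frontier_of_tendsto' hlim
      (measure_frontier_slab_eq_zero (measure_face_eq_zero_of_tendsto hP hlim) i a b)) ?_⟩
  simp only [(hP _).2 i a b ha hab hb]
  exact tendsto_const_nhds

end WeakLimit

lemma tendsto_boxDist_of_cauchy_of_subseq {d : ℕ} {μs : ℕ → Measure (Fin d → ℝ)}
    [∀ n, IsFiniteMeasure (μs n)] {μ : Measure (Fin d → ℝ)} [IsFiniteMeasure μ]
    (hC : ∀ ε : ℝ, 0 < ε → ∃ N : ℕ, ∀ m ≥ N, ∀ n ≥ N, boxDist (μs m) (μs n) < ε)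
    {φ : ℕ → ℕ} (hφ : Tendsto φ atTop atTop)
    (hlim : ∀ a b : Fin d → ℝ, Tendsto (fun k => μs (φ k) (univ.pi fun i => Icc (a i) (b i)))
      atTop (𝓝 (μ (univ.pi fun i => Icc (a i) (b i))))) :
    Tendsto (fun n => boxDist (μs n) μ) atTop (𝓝 0) := by
  refine tendsto_order.2 ⟨fun _ h => Eventually.of_forall fun _ => h.trans_le boxDist_nonneg,
    fun ε hε => ?_⟩
  obtain ⟨N, hN⟩ := hC (ε / 2) (half_pos hε)
  refine eventually_atTop.2 ⟨N, fun n hn => ?_⟩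
  have hle : boxDist (μs n) μ ≤ ε / 2 := boxDist_le_of_tendsto hlim
    ((hφ.eventually_ge_atTop N).mono fun k hk => (hN n hn (φ k) hk).le)
  exact hle.trans_lt (half_lt_self hε)

/-- Completeness of the space of `d`-dimensional permutons for the box distance: a
sequence of permutons converges to some permuton in box distance if and only if it is
Cauchy with respect to `d_□`. -/
theorem permuton_complete {d : ℕ} (μs : ℕ → Measure (Fin d → ℝ))
    (hμs : ∀ n, IsPermuton (μs n)) :
    (∃ μ : Measure (Fin d → ℝ), IsPermuton μ ∧
        Tendsto (fun n => boxDist (μs n) μ) atTop (𝓝 0)) ↔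
      ∀ ε : ℝ, 0 < ε → ∃ N : ℕ, ∀ m ≥ N, ∀ n ≥ N, boxDist (μs m) (μs n) < ε := by
  have := fun n => (hμs n).1
  constructor
  · rintro ⟨μ, hμ, hlim⟩ ε hε
    have := hμ.1
    obtain ⟨N, hN⟩ := eventually_atTop.1 (hlim.eventually (gt_mem_nhds (half_pos hε)))
    refine ⟨N, fun m hm n hn => ?_⟩
    calc boxDist (μs m) (μs n) ≤ boxDist (μs m) μ + boxDist μ (μs n) := boxDist_triangle
      _ < ε / 2 + ε / 2 := by rw [boxDist_comm (μ := μ)]; exact add_lt_add (hN m hm) (hN n hn)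
      _ = ε := add_halves ε
  · intro hC
    let P n : ProbabilityMeasure (Fin d → ℝ) := ⟨μs n, (hμs n).1⟩
    obtain ⟨μ, φ, hφ, hPφ⟩ := exists_tendsto_subseq_of_measure_compl_eq_zero (P := P)
      isCompact_Icc fun n => (hμs n).measure_compl_Icc
    have hperm : ∀ k, IsPermuton ((P ∘ φ) k : Measure (Fin d → ℝ)) := fun k => hμs (φ k)
    exact ⟨μ, isPermuton_of_tendsto hperm hPφ, tendsto_boxDist_of_cauchy_of_subseq hC
      hφ.tendsto_atTop (tendsto_measure_box_of_tendsto hperm hPφ)⟩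
end

section
/- For any $d$-separable permutation $\sigma$ of size at least $2$, the primary block structure is unique: if $\sigma = \sigma_1 \oplus_s \sigma_2 = \tau_1 \oplus_{s'} \tau_2$ are two block-sum decompositions of $\sigma$ into nontrivial pieces with sign sequences $s, s' \in \{\pm 1\}^{d-1}$, then $s = s'$. -/
/-- The block sum `σ₁ ⊕ₛ σ₂` of two `(d+1)`-dimensional permutations with sign sequence
`s : Fin d → Bool` (`true` = `+1`): in coordinate `j`, the values of `σ₂` are placed
entirely above those of `σ₁` if `s j = true` and entirely below otherwise. -/
def blockSum {d n₁ n₂ : ℕ} (σ₁ : Fin n₁ → Fin d → Fin n₁) (σ₂ : Fin n₂ → Fin d → Fin n₂)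
    (s : Fin d → Bool) : Fin (n₁ + n₂) → Fin d → Fin (n₁ + n₂) :=
  fun i j => Fin.addCases
    (fun i₁ => if s j then Fin.castAdd n₂ (σ₁ i₁ j) else Fin.addNat (σ₁ i₁ j) n₂)
    (fun i₂ => if s j then Fin.natAdd n₁ (σ₂ i₂ j)
      else Fin.castLE (Nat.le_add_left n₂ n₁) (σ₂ i₂ j)) i

/-- `(d+1)`-separable permutations: those obtained from the trivial size-1 permutation by
iterated block sums. -/
inductive IsSep (d : ℕ) : (n : ℕ) → (Fin n → Fin d → Fin n) → Prop
  | single (σ : Fin 1 → Fin d → Fin 1) : IsSep d 1 σ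
  | sum {n₁ n₂ : ℕ} (σ₁ : Fin n₁ → Fin d → Fin n₁) (σ₂ : Fin n₂ → Fin d → Fin n₂)
      (s : Fin d → Bool) : IsSep d n₁ σ₁ → IsSep d n₂ σ₂ →
      IsSep d (n₁ + n₂) (blockSum σ₁ σ₂ s)

lemma blockSum_sign_aux {d n₁ n₂ m₁ m₂ : ℕ}
    (h₁ : 1 ≤ n₁) (h₂ : 1 ≤ n₂) (h₃ : 1 ≤ m₁) (h₄ : 1 ≤ m₂)
    (σ₁ : Fin n₁ → Fin d → Fin n₁) (σ₂ : Fin n₂ → Fin d → Fin n₂)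
    (τ₁ : Fin m₁ → Fin d → Fin m₁) (τ₂ : Fin m₂ → Fin d → Fin m₂)
    (hσ₁ : IsDPerm σ₁) (hσ₂ : IsDPerm σ₂)
    (s s' : Fin d → Bool) (hsize : n₁ + n₂ = m₁ + m₂)
    (heq : ∀ (i : Fin (n₁ + n₂)) (j : Fin d),
      ((blockSum σ₁ σ₂ s i j : ℕ)) = ((blockSum τ₁ τ₂ s' (Fin.cast hsize i) j : ℕ)))
    (j : Fin d) (hs : s j = true) (hs' : s' j = false) : False := by
  -- index achieving value 0 on the left
  obtain ⟨i₁, hi₁⟩ := (hσ₁ j).2 ⟨0, h₁⟩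
  have e0 := heq (Fin.castAdd n₂ i₁) j
  rw [show blockSum σ₁ σ₂ s (Fin.castAdd n₂ i₁) j
      = Fin.castAdd n₂ (σ₁ i₁ j) by simp [blockSum, hs]] at e0
  simp only [Fin.coe_castAdd, hi₁] at e0
  -- hence its index lies in the second τ-block
  have hm₁ : m₁ ≤ (i₁ : ℕ) := by
    by_contra hlt
    push_neg at hlt
    have : (Fin.cast hsize (Fin.castAdd n₂ i₁)) = Fin.castAdd m₂ ⟨(i₁ : ℕ), hlt⟩ := by
      ext; simp
    rw [this, show blockSum τ₁ τ₂ s' (Fin.castAdd m₂ ⟨(i₁ : ℕ), hlt⟩) j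
        = Fin.addNat (τ₁ ⟨(i₁ : ℕ), hlt⟩ j) m₂ by
          unfold blockSum; rw [Fin.addCases_left]; simp [hs']] at e0
    simp only [Fin.coe_addNat] at e0
    omega
  -- index achieving the maximal value on the left
  obtain ⟨i₂, hi₂⟩ := (hσ₂ j).2 ⟨n₂ - 1, by omega⟩
  have eM := heq (Fin.natAdd n₁ i₂) j
  rw [show blockSum σ₁ σ₂ s (Fin.natAdd n₁ i₂) j
      = Fin.natAdd n₁ (σ₂ i₂ j) by simp [blockSum, hs]] at eM
  simp only [Fin.coe_natAdd, hi₂] at eM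
  -- hence its index lies in the first τ-block
  have hm₂ : n₁ + (i₂ : ℕ) < m₁ := by
    by_contra hge
    push_neg at hge
    have hlt : n₁ + (i₂ : ℕ) - m₁ < m₂ := by have := i₂.isLt; omega
    have : (Fin.cast hsize (Fin.natAdd n₁ i₂)) = Fin.natAdd m₁ ⟨n₁ + (i₂ : ℕ) - m₁, hlt⟩ := by
      ext; simp; omega
    rw [this, show blockSum τ₁ τ₂ s' (Fin.natAdd m₁ ⟨n₁ + (i₂ : ℕ) - m₁, hlt⟩) j
        = Fin.castLE (Nat.le_add_left m₂ m₁) (τ₂ ⟨n₁ + (i₂ : ℕ) - m₁, hlt⟩ j)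
        by unfold blockSum; rw [Fin.addCases_right]; simp [hs']] at eM
    have := (τ₂ ⟨n₁ + (i₂ : ℕ) - m₁, hlt⟩ j).isLt
    simp only [Fin.coe_castLE] at eM
    omega
  have := i₁.isLt
  omega

/-- Uniqueness of the primary block structure: if a `(d+1)`-separable permutation of size
at least 2 admits two block-sum decompositions into nontrivial pieces with sign sequences
`s` and `s'`, then `s = s'`. -/
theorem block_structure_sign_unique {d n₁ n₂ m₁ m₂ : ℕ}
    (h₁ : 1 ≤ n₁) (h₂ : 1 ≤ n₂) (h₃ : 1 ≤ m₁) (h₄ : 1 ≤ m₂)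
    (σ₁ : Fin n₁ → Fin d → Fin n₁) (σ₂ : Fin n₂ → Fin d → Fin n₂)
    (τ₁ : Fin m₁ → Fin d → Fin m₁) (τ₂ : Fin m₂ → Fin d → Fin m₂)
    (hσ₁ : IsDPerm σ₁) (hσ₂ : IsDPerm σ₂) (hτ₁ : IsDPerm τ₁) (hτ₂ : IsDPerm τ₂)
    (s s' : Fin d → Bool)
    (hsep : IsSep d (n₁ + n₂) (blockSum σ₁ σ₂ s))
    (hsize : n₁ + n₂ = m₁ + m₂)
    (heq : ∀ (i : Fin (n₁ + n₂)) (j : Fin d),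
      ((blockSum σ₁ σ₂ s i j : ℕ)) = ((blockSum τ₁ τ₂ s' (Fin.cast hsize i) j : ℕ))) :
    s = s' := by
  funext j
  by_contra hne
  have heq' : ∀ (i : Fin (m₁ + m₂)) (j : Fin d),
      ((blockSum τ₁ τ₂ s' i j : ℕ)) = ((blockSum σ₁ σ₂ s (Fin.cast hsize.symm i) j : ℕ)) := by
    intro i j
    have := heq (Fin.cast hsize.symm i) j
    simpa using this.symm
  match hA : s j, hB : s' j with
  | true, false =>
    exact blockSum_sign_aux h₁ h₂ h₃ h₄ σ₁ σ₂ τ₁ τ₂ hσ₁ hσ₂ s s' hsize heq j hA hB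
  | false, true =>
    exact blockSum_sign_aux h₃ h₄ h₁ h₂ τ₁ τ₂ σ₁ σ₂ hτ₁ hτ₂ s' s hsize.symm heq' j hB hA
  | true, true => exact hne (hA.trans hB.symm)
  | false, false => exact hne (hA.trans hB.symm)
end

section
/- For each coalescent-walk process $Z$ on a discrete interval $I$ with starting points $J$, the relation $\le^{\mathrm{up}}$ defined by: $j \le^{\mathrm{up}} j$ for all $j \in J$, and for $j_1 < j_2$ in $J$, $j_1 \le^{\mathrm{up}} j_2$ if $Z^{(j_1)}_{j_2} < 0$ and $j_2 \le^{\mathrm{up}} j_1$ otherwise, is a total order on $J$. -/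
/-- `Z` is a coalescent-walk process on the integer interval `I` with starting points
`J ⊆ I`: each walk `Z j` starts at `0` at time `j`, and the walks do not cross (hence
coalesce once they meet). -/
structure IsCoalescentWalk (I J : Set ℤ) (Z : ℤ → ℤ → ℝ) : Prop where
  ordConn : I.OrdConnected
  subset : J ⊆ I
  start : ∀ j ∈ J, Z j j = 0
  noncross : ∀ j₁ ∈ J, ∀ j₂ ∈ J, ∀ s ∈ I, ∀ s' ∈ I,
    j₁ ≤ s → j₂ ≤ s → s ≤ s' → Z j₂ s ≤ Z j₁ s → Z j₂ s' ≤ Z j₁ s'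

/-- The relation `≤ᵘᵖ` on the starting points of a coalescent-walk process: `j ≤ᵘᵖ j`,
and for `j₁ < j₂`, `j₁ ≤ᵘᵖ j₂` when `Z^{(j₁)}_{j₂} < 0` while `j₂ ≤ᵘᵖ j₁` otherwise. -/
def leUp (Z : ℤ → ℤ → ℝ) (j₁ j₂ : ℤ) : Prop :=
  j₁ = j₂ ∨ (j₁ < j₂ ∧ Z j₁ j₂ < 0) ∨ (j₂ < j₁ ∧ ¬ Z j₂ j₁ < 0)

/-- For any coalescent-walk process, the relation `≤ᵘᵖ` is a total order on the set `J`
of starting points: it is reflexive, antisymmetric, transitive, and total. -/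
theorem leUp_total_order (I J : Set ℤ) (Z : ℤ → ℤ → ℝ)
    (hZ : IsCoalescentWalk I J Z) :
    (∀ j ∈ J, leUp Z j j) ∧
    (∀ j₁ ∈ J, ∀ j₂ ∈ J, leUp Z j₁ j₂ → leUp Z j₂ j₁ → j₁ = j₂) ∧
    (∀ j₁ ∈ J, ∀ j₂ ∈ J, ∀ j₃ ∈ J, leUp Z j₁ j₂ → leUp Z j₂ j₃ → leUp Z j₁ j₃) ∧
    (∀ j₁ ∈ J, ∀ j₂ ∈ J, leUp Z j₁ j₂ ∨ leUp Z j₂ j₁) := by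
  obtain ⟨hOC, hJI, hstart, hnc⟩ := hZ
  refine ⟨fun j _ => Or.inl rfl, ?_, ?_, ?_⟩
  · rintro j₁ _ j₂ _ (h | ⟨h1, h2⟩ | ⟨h1, h2⟩) (h' | ⟨h1', h2'⟩ | ⟨h1', h2'⟩) <;>
      first | omega | exact absurd h2 h2' | exact absurd h2' h2
  · rintro j₁ hj₁ j₂ hj₂ j₃ hj₃ (rfl | ⟨h12, hZ12⟩ | ⟨h21, hZ21⟩) h2
    · exact h2
    · rcases h2 with rfl | ⟨h23, hZ23⟩ | ⟨h32, hZ32⟩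
      · exact Or.inr (Or.inl ⟨h12, hZ12⟩)
      · -- j₁ < j₂ < j₃
        refine Or.inr (Or.inl ⟨h12.trans h23, ?_⟩)
        have := hnc j₂ hj₂ j₁ hj₁ j₂ (hJI hj₂) j₃ (hJI hj₃) le_rfl h12.le h23.le
          (by rw [hstart j₂ hj₂]; linarith)
        linarith
      · -- j₁ < j₂, j₃ < j₂
        rcases lt_trichotomy j₁ j₃ with h | h | h
        · refine Or.inr (Or.inl ⟨h, ?_⟩)
          by_contra hc
          have := hnc j₁ hj₁ j₃ hj₃ j₃ (hJI hj₃) j₂ (hJI hj₂) h.le le_rfl h32.le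
            (by rw [hstart j₃ hj₃]; linarith)
          exact hZ32 (by linarith)
        · exact Or.inl h
        · refine Or.inr (Or.inr ⟨h, fun hc => ?_⟩)
          have := hnc j₁ hj₁ j₃ hj₃ j₁ (hJI hj₁) j₂ (hJI hj₂) le_rfl h.le h12.le
            (by rw [hstart j₁ hj₁]; linarith)
          exact hZ32 (by linarith)
    · rcases h2 with rfl | ⟨h23, hZ23⟩ | ⟨h32, hZ32⟩
      · exact Or.inr (Or.inr ⟨h21, hZ21⟩)
      · -- j₂ < j₁, j₂ < j₃
        rcases lt_trichotomy j₁ j₃ with h | h | h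
        · refine Or.inr (Or.inl ⟨h, ?_⟩)
          have := hnc j₂ hj₂ j₁ hj₁ j₁ (hJI hj₁) j₃ (hJI hj₃) h21.le le_rfl h.le
            (by rw [hstart j₁ hj₁]; linarith)
          linarith
        · exact Or.inl h
        · refine Or.inr (Or.inr ⟨h, fun hc => ?_⟩)
          have := hnc j₃ hj₃ j₂ hj₂ j₃ (hJI hj₃) j₁ (hJI hj₁) le_rfl h23.le h.le
            (by rw [hstart j₃ hj₃]; linarith)
          exact hZ21 (by linarith)
      · -- j₃ < j₂ < j₁
        refine Or.inr (Or.inr ⟨h32.trans h21, fun hc => ?_⟩)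
        have := hnc j₃ hj₃ j₂ hj₂ j₂ (hJI hj₂) j₁ (hJI hj₁) h32.le le_rfl h21.le
          (by rw [hstart j₂ hj₂]; linarith)
        exact hZ21 (by linarith)
  · intro j₁ _ j₂ _
    rcases lt_trichotomy j₁ j₂ with h | h | h
    · by_cases hc : Z j₁ j₂ < 0
      · exact Or.inl (Or.inr (Or.inl ⟨h, hc⟩))
      · exact Or.inr (Or.inr (Or.inr ⟨h, hc⟩))
    · exact Or.inl (Or.inl h)
    · by_cases hc : Z j₂ j₁ < 0
      · exact Or.inr (Or.inr (Or.inl ⟨h, hc⟩))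
      · exact Or.inl (Or.inr (Or.inr ⟨h, hc⟩))
end
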